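/- Let μ̃_{t−1}, μ ∈ ℝ^d with μ̃_{t−1} ≠ μ, set Δ = (μ − μ̃_{t−1})/‖μ − μ̃_{t−1}‖ and η = 0.075. Suppose g ∈ ℝ^d satisfies ‖g‖ ≤ 1 and ⟨g, Δ⟩ > 0.1, and d_t > 0 satisfies 0.99‖μ̃_{t−1} − μ‖ ≤ d_t ≤ 1.15‖μ̃_{t−1} − μ‖. Define μ̃_t = μ̃_{t−1} + η·d_t·g. Then ‖μ̃_t − μ‖ ≤ 0.999·‖μ̃_{t−1} − μ‖. -/

import Mathlib

notation "⟪" x ", " y "⟫" => @inner ℝ _ _ x y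

/-!
Writing `e = μprev - μ` and `s = 0.075 * dt`, the step expands as
`‖e + s • g‖² = ‖e‖² - 2 s ⟪g, -e⟫ + s² ‖g‖²`. The correlation hypothesis makes the linear term
at least `2 · 0.075 · 0.99 · 0.1 · ‖e‖²`, while `‖g‖ ≤ 1` and `dt ≤ 1.15 ‖e‖` bound the
quadratic term by `0.075² · 1.15² · ‖e‖²`, so `‖e + s • g‖² ≤ 0.993 ‖e‖² ≤ (0.999 ‖e‖)²`.
-/

section GradientStep

variable {E : Type*} [NormedAddCommGroup E] [InnerProductSpace ℝ E]

lemma mul_norm_le_inner_of_le_inner_inv_norm_smul {c : ℝ} {g v : E}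
    (h : c ≤ ⟪g, ‖v‖⁻¹ • v⟫) : c * ‖v‖ ≤ ⟪g, v⟫ := by
  rcases eq_or_ne v 0 with rfl | hv
  · simp
  · rw [real_inner_smul_right] at h
    rw [mul_comm]
    exact (le_inv_mul_iff₀ (norm_pos_iff.mpr hv)).1 h

lemma norm_add_smul_sub_sq_le (x μ g : E) {s c : ℝ} (hs : 0 ≤ s) (hg : ‖g‖ ≤ 1)
    (hc : c ≤ ⟪g, μ - x⟫) :
    ‖x + s • g - μ‖ ^ 2 ≤ ‖x - μ‖ ^ 2 - 2 * s * c + s ^ 2 := by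
  have hinner : ⟪x - μ, g⟫ = -⟪g, μ - x⟫ := by
    rw [real_inner_comm, ← inner_neg_right, neg_sub]
  have hg2 : ‖g‖ ^ 2 ≤ 1 := pow_le_one₀ (norm_nonneg g) hg
  calc ‖x + s • g - μ‖ ^ 2 = ‖x - μ‖ ^ 2 - 2 * s * ⟪g, μ - x⟫ + s ^ 2 * ‖g‖ ^ 2 := by
        rw [add_sub_right_comm, norm_add_sq_real, real_inner_smul_right, hinner, norm_smul,
          Real.norm_of_nonneg hs]
        ring
    _ ≤ ‖x - μ‖ ^ 2 - 2 * s * c + s ^ 2 * 1 := by gcongr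
    _ = ‖x - μ‖ ^ 2 - 2 * s * c + s ^ 2 := by ring

lemma norm_step_sq_le (x μ g : E) {η γ a b dt : ℝ} (hη : 0 ≤ η) (hγ : 0 ≤ γ) (ha : 0 ≤ a)
    (hg : ‖g‖ ≤ 1) (hcorr : γ * ‖x - μ‖ ≤ ⟪g, μ - x⟫)
    (hdl : a * ‖x - μ‖ ≤ dt) (hdu : dt ≤ b * ‖x - μ‖) :
    ‖x + (η * dt) • g - μ‖ ^ 2 ≤ (1 + η ^ 2 * b ^ 2 - 2 * η * a * γ) * ‖x - μ‖ ^ 2 := by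
  set r := ‖x - μ‖
  have hdt : 0 ≤ dt := (mul_nonneg ha (norm_nonneg _)).trans hdl
  calc ‖x + (η * dt) • g - μ‖ ^ 2 ≤ r ^ 2 - 2 * (η * dt) * (γ * r) + (η * dt) ^ 2 :=
        norm_add_smul_sub_sq_le x μ g (mul_nonneg hη hdt) hg hcorr
    _ ≤ r ^ 2 - 2 * (η * (a * r)) * (γ * r) + (η * (b * r)) ^ 2 := by gcongr
    _ = (1 + η ^ 2 * b ^ 2 - 2 * η * a * γ) * r ^ 2 := by ring

end GradientStep

theorem gradient_descent_step_general {d : ℕ}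
    (μprev μ g : EuclideanSpace ℝ (Fin d)) (dt : ℝ)
    (hg : ‖g‖ ≤ 1)
    (hcorr : 0.1 < ⟪g, ‖μ - μprev‖⁻¹ • (μ - μprev)⟫)
    (hdl : 0.99 * ‖μprev - μ‖ ≤ dt) (hdu : dt ≤ 1.15 * ‖μprev - μ‖) :
    ‖(μprev + (0.075 * dt) • g) - μ‖ ≤ 0.999 * ‖μprev - μ‖ := by
  have hcorr' : 0.1 * ‖μprev - μ‖ ≤ ⟪g, μ - μprev⟫ := by
    simpa only [norm_sub_rev] using mul_norm_le_inner_of_le_inner_inv_norm_smul hcorr.le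
  refine (sq_le_sq₀ (norm_nonneg _) (by positivity)).1 ?_
  calc ‖(μprev + (0.075 * dt) • g) - μ‖ ^ 2
      ≤ (1 + 0.075 ^ 2 * 1.15 ^ 2 - 2 * 0.075 * 0.99 * 0.1) * ‖μprev - μ‖ ^ 2 :=
        norm_step_sq_le μprev μ g (by norm_num) (by norm_num) (by norm_num) hg hcorr' hdl hdu
    _ ≤ 0.999 ^ 2 * ‖μprev - μ‖ ^ 2 := by gcongr; norm_num
    _ = (0.999 * ‖μprev - μ‖) ^ 2 := (mul_pow _ _ _).symm

/-- One step of the gradient-descent mean estimation procedure contracts the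
distance to the true mean by a factor `0.999`. -/
theorem gradient_descent_step {d : ℕ}
    (μprev μ g : EuclideanSpace ℝ (Fin d)) (dt : ℝ)
    (hne : μprev ≠ μ)
    (hg : ‖g‖ ≤ 1)
    (hcorr : 0.1 < ⟪g, ‖μ - μprev‖⁻¹ • (μ - μprev)⟫)
    (hd0 : 0 < dt)
    (hdl : 0.99 * ‖μprev - μ‖ ≤ dt) (hdu : dt ≤ 1.15 * ‖μprev - μ‖) :
    ‖(μprev + (0.075 * dt) • g) - μ‖ ≤ 0.999 * ‖μprev - μ‖ :=
  gradient_descent_step_general μprev μ g dt hg hcorr hdl hdu
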